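/- arXiv:1706.08417 — 4 statements merged into one kernel-verified Lean document; each statement's English description precedes it below -/
import Mathlib

section
/- Let X be a complex Banach space, 1 ≤ p < ∞, and let (M_k)_{k∈ℤ} be a sequence of bounded linear operators on X. Then the following are equivalent: (i) (M_k)_{k∈ℤ} is an (L^p, H^{1,p})-multiplier, i.e. for every f ∈ L^p(𝕋;X) there exists u ∈ H^{1,p}(𝕋;X) with û(k) = M_k f̂(k) for all k ∈ ℤ; (ii) (ik·M_k)_{k∈ℤ} is an (L^p, L^p)-multiplier, i.e. for every f ∈ L^p(𝕋;X) there exists v ∈ L^p(𝕋;X) with v̂(k) = ik·M_k f̂(k) for all k ∈ ℤ. -/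
/-!
For (ii) ⇒ (i), let `v` be the output of the multiplier `(ik M_k)` on `f`. Then `v̂(0) = 0`, so the
primitive `U(t) = ∫₀ᵗ v` is continuous and `2π`-periodic, and integration by parts gives
`v̂(k) = ik Û(k)`. Since `U` is only absolutely continuous and `X`-valued, the integration by parts
is done by Fubini on the triangle `s ≤ t`. Adding the constant `M₀ f̂(0) - Û(0)` to `U` fixes the
zeroth coefficient, and for `k ≠ 0` the equation `û(k) = M_k f̂(k)` follows by cancelling `ik`.
The implication (i) ⇒ (ii) is immediate.
-/

open MeasureTheory AddCircle Real ENNReal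

instance : Fact (0 < 2 * π) := ⟨by positivity⟩

open Set

section IntervalIntegral

variable {E : Type*} [NormedAddCommGroup E] [NormedSpace ℝ E] {a b : ℝ}

theorem intervalIntegral_integral_swap_triangle (hab : a ≤ b) {F : ℝ → ℝ → E}
    (hF : Integrable (Function.uncurry F)
      ((volume.restrict (Ioc a b)).prod (volume.restrict (Ioc a b)))) :
    ∫ t in a..b, ∫ s in a..t, F t s = ∫ s in a..b, ∫ t in s..b, F t s := by
  set μ := volume.restrict (Ioc a b)
  let G : ℝ → ℝ → E := fun t s => if s ≤ t then F t s else 0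
  have hG : Integrable (Function.uncurry G) (μ.prod μ) := by
    have : Function.uncurry G = {p : ℝ × ℝ | p.2 ≤ p.1}.indicator (Function.uncurry F) := by
      ext ⟨t, s⟩; simp [G, indicator_apply]
    rw [this]
    exact hF.indicator (measurableSet_le measurable_snd measurable_fst)
  have inner_left : ∀ t ∈ Ioc a b, ∫ s, G t s ∂μ = ∫ s in a..t, F t s := by
    intro t ht
    have : G t = (Iic t).indicator (F t) := by ext s; simp [G, indicator_apply]
    rw [this, integral_indicator measurableSet_Iic, Measure.restrict_restrict measurableSet_Iic,
      intervalIntegral.integral_of_le ht.1.le, Iic_inter_Ioc_of_le ht.2]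
  have inner_right : ∀ s ∈ Ioc a b, ∫ t, G t s ∂μ = ∫ t in s..b, F t s := by
    intro s hs
    have : (fun t => G t s) = (Ici s).indicator (fun t => F t s) := by
      ext t; simp [G, indicator_apply]
    rw [this, integral_indicator measurableSet_Ici, Measure.restrict_restrict measurableSet_Ici,
      intervalIntegral.integral_of_le hs.2, ← integral_Icc_eq_integral_Ioc]
    congr 2
    ext t
    simp only [mem_inter_iff, mem_Ici, mem_Ioc, mem_Icc]
    exact ⟨fun h => ⟨h.1, h.2.2⟩, fun h => ⟨h.1, hs.1.trans_le h.1, h.2⟩⟩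
  calc ∫ t in a..b, ∫ s in a..t, F t s = ∫ t, ∫ s, G t s ∂μ ∂μ := by
        rw [intervalIntegral.integral_of_le hab]
        exact setIntegral_congr_fun measurableSet_Ioc fun t ht => (inner_left t ht).symm
    _ = ∫ s, ∫ t, G t s ∂μ ∂μ := integral_integral_swap hG
    _ = ∫ s in a..b, ∫ t in s..b, F t s := by
        rw [intervalIntegral.integral_of_le hab]
        exact setIntegral_congr_fun measurableSet_Ioc inner_right

theorem integral_deriv_smul_primitive_eq_sub {E : Type*} [NormedAddCommGroup E] [NormedSpace ℂ E]
    [CompleteSpace E] {a b : ℝ} (hab : a ≤ b) {w : ℝ → E} (hw : IntervalIntegrable w volume a b)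
    {e e' : ℝ → ℂ} (he : ∀ t ∈ Icc a b, HasDerivAt e (e' t) t) (he' : ContinuousOn e' (Icc a b)) :
    ∫ t in a..b, e' t • ∫ s in a..t, w s = e b • (∫ s in a..b, w s) - ∫ s in a..b, e s • w s := by
  have hw' : IntegrableOn w (Ioc a b) := (intervalIntegrable_iff_integrableOn_Ioc_of_le hab).mp hw
  have he_cont : ContinuousOn e (uIcc a b) := by
    rw [uIcc_of_le hab]
    exact fun t ht => (he t ht).continuousAt.continuousWithinAt
  have hprod : Integrable (Function.uncurry fun t s => e' t • w s)
      ((volume.restrict (Ioc a b)).prod (volume.restrict (Ioc a b))) :=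
    (he'.integrableOn_Icc.mono_set Ioc_subset_Icc_self).smul_prod hw'
  have inner : ∀ s ∈ uIcc a b, ∫ t in s..b, e' t • w s = (e b - e s) • w s := by
    intro s hs
    rw [uIcc_of_le hab] at hs
    rw [intervalIntegral.integral_smul_const, intervalIntegral.integral_eq_sub_of_hasDerivAt]
    · intro t ht
      rw [uIcc_of_le hs.2] at ht
      exact he t ⟨hs.1.trans ht.1, ht.2⟩
    · exact (he'.mono (Icc_subset_Icc_left hs.1)).intervalIntegrable_of_Icc hs.2
  calc ∫ t in a..b, e' t • ∫ s in a..t, w s = ∫ t in a..b, ∫ s in a..t, e' t • w s := by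
        simp only [intervalIntegral.integral_smul]
    _ = ∫ s in a..b, ∫ t in s..b, e' t • w s := intervalIntegral_integral_swap_triangle hab hprod
    _ = ∫ s in a..b, (e b - e s) • w s := intervalIntegral.integral_congr inner
    _ = e b • (∫ s in a..b, w s) - ∫ s in a..b, e s • w s := by
        simp only [sub_smul]
        rw [intervalIntegral.integral_sub (hw.continuousOn_smul continuousOn_const)
          (hw.continuousOn_smul he_cont), intervalIntegral.integral_smul]

end IntervalIntegral

namespace AddCircle

variable {T : ℝ} [hT : Fact (0 < T)] {E : Type*} [NormedAddCommGroup E]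

theorem intervalIntegrable_comp_coe {v : AddCircle T → E} (hv : Integrable v haarAddCircle)
    (t : ℝ) : IntervalIntegrable (fun x : ℝ => v x) volume t (t + T) := by
  have hv_vol : Integrable v volume := by
    rw [volume_eq_smul_haarAddCircle]
    exact hv.smul_measure ofReal_ne_top
  rw [intervalIntegrable_iff_integrableOn_Ioc_of_le (by linarith [hT.out])]
  exact ((AddCircle.measurePreserving_mk T t).integrable_comp hv_vol.1).mpr hv_vol

variable [NormedSpace ℂ E]

theorem intervalIntegral_eq_smul_fourierCoeff_zero (v : AddCircle T → E) :
    ∫ t in 0..T, v t = T • fourierCoeff v 0 := by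
  rw [fourierCoeff_eq_intervalIntegral v 0 0, zero_add, smul_smul, mul_one_div_cancel hT.out.ne',
    one_smul]
  simp

noncomputable def primitive (v : AddCircle T → E) : AddCircle T → E :=
  liftIco T 0 fun t => ∫ s in 0..t, v s

theorem continuous_primitive {v : AddCircle T → E} (hv : Integrable v haarAddCircle)
    (hv₀ : fourierCoeff v 0 = 0) : Continuous (primitive v) := by
  refine liftIco_continuous ?_ ?_
  · rw [zero_add, intervalIntegral.integral_same, intervalIntegral_eq_smul_fourierCoeff_zero, hv₀,
      smul_zero]
  · rw [← uIcc_of_le (by linarith [hT.out])]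
    exact intervalIntegral.continuousOn_primitive_interval' (intervalIntegrable_comp_coe hv 0)
      left_mem_uIcc

theorem fourierCoeff_eq_smul_fourierCoeff_primitive [CompleteSpace E] {v : AddCircle T → E}
    (hv : Integrable v haarAddCircle) (hv₀ : fourierCoeff v 0 = 0) (n : ℤ) :
    fourierCoeff v n = (2 * π * Complex.I * n / T) • fourierCoeff (primitive v) n := by
  have hmean : ∫ s in 0..T, v s = 0 := by
    rw [intervalIntegral_eq_smul_fourierCoeff_zero, hv₀, smul_zero]
  have hprimitive_coeff : fourierCoeff (primitive v) n =
      (1 / T) • ∫ t in 0..T, fourier (-n) (t : AddCircle T) • ∫ s in 0..t, v s := by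
    rw [fourierCoeff_eq_intervalIntegral _ n 0, zero_add]
    congr 1
    refine intervalIntegral.integral_congr_Ioo_of_le hT.out.le fun t ht => ?_
    rw [primitive, liftIco_coe_apply (by rw [zero_add]; exact Ioo_subset_Ico_self ht)]
  have hparts := integral_deriv_smul_primitive_eq_sub hT.out.le
    (by simpa using intervalIntegrable_comp_coe hv 0)
    (fun t _ => hasDerivAt_fourier_neg T n t) (by fun_prop)
  simp only [mul_smul, intervalIntegral.integral_smul, hmean, smul_zero, zero_sub] at hparts
  calc fourierCoeff v n = (1 / T) • ∫ t in 0..T, fourier (-n) (t : AddCircle T) • v t := by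
        rw [fourierCoeff_eq_intervalIntegral v n 0, zero_add]
    _ = (1 / T) • -((-2 * π * Complex.I * n / T) •
          ∫ t in 0..T, fourier (-n) (t : AddCircle T) • ∫ s in 0..t, v s) := by
        rw [hparts, neg_neg]
    _ = (2 * π * Complex.I * n / T) • fourierCoeff (primitive v) n := by
        rw [hprimitive_coeff]
        module

theorem fourierCoeff_const [CompleteSpace E] (c : E) :
    fourierCoeff (fun _ : AddCircle T => c) = Pi.single 0 c := by
  ext n
  have h := congrFun (fourierCoeff_fourier (T := T) 0) n
  simp only [fourierCoeff, fourier_zero, smul_eq_mul, mul_one] at h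
  rw [fourierCoeff, integral_smul_const, h, Pi.single_apply_smul]

theorem exists_continuous_fourierCoeff_eq_smul [CompleteSpace E] {v : AddCircle T → E}
    (hv : Integrable v haarAddCircle) (hv₀ : fourierCoeff v 0 = 0) (c : E) :
    ∃ u : AddCircle T → E, Continuous u ∧ fourierCoeff u 0 = c ∧
      ∀ n : ℤ, fourierCoeff v n = (2 * π * Complex.I * n / T) • fourierCoeff u n := by
  have hcont := continuous_primitive hv hv₀
  have hcoeff : fourierCoeff (primitive v + fun _ => c - fourierCoeff (primitive v) 0) =
      fourierCoeff (primitive v) + Pi.single 0 (c - fourierCoeff (primitive v) 0) := by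
    rw [fourierCoeff.add (hcont.integrable_of_hasCompactSupport (.of_compactSpace _))
      (integrable_const _), fourierCoeff_const]
  refine ⟨primitive v + fun _ => c - fourierCoeff (primitive v) 0, hcont.add continuous_const,
    by simp [hcoeff], fun n => ?_⟩
  rcases eq_or_ne n 0 with rfl | hn
  · simp [hv₀]
  · simp [hcoeff, hn, fourierCoeff_eq_smul_fourierCoeff_primitive hv hv₀ n]

end AddCircle

theorem multiplier_Lp_H1p_iff_general
    {X : Type} [NormedAddCommGroup X] [NormedSpace ℂ X] [CompleteSpace X]
    (p : ℝ≥0∞) (hp1 : 1 ≤ p) (M : ℤ → X →L[ℂ] X) :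
    (∀ f : AddCircle (2 * π) → X, MemLp f p haarAddCircle →
        ∃ u : AddCircle (2 * π) → X, MemLp u p haarAddCircle ∧
          (∃ v : AddCircle (2 * π) → X, MemLp v p haarAddCircle ∧
            ∀ k : ℤ, fourierCoeff v k = (Complex.I * (k : ℂ)) • fourierCoeff u k) ∧
          ∀ k : ℤ, fourierCoeff u k = M k (fourierCoeff f k)) ↔
      (∀ f : AddCircle (2 * π) → X, MemLp f p haarAddCircle →
        ∃ v : AddCircle (2 * π) → X, MemLp v p haarAddCircle ∧
          ∀ k : ℤ, fourierCoeff v k = (Complex.I * (k : ℂ)) • (M k (fourierCoeff f k))) := by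
  refine ⟨fun h f hf => ?_, fun h f hf => ?_⟩
  · obtain ⟨u, -, ⟨v, hv, hvu⟩, huf⟩ := h f hf
    exact ⟨v, hv, fun k => by rw [hvu k, huf k]⟩
  obtain ⟨v, hv, hvf⟩ := h f hf
  have hv₀ : fourierCoeff v 0 = 0 := by simpa using hvf 0
  obtain ⟨u, hu, hu₀, hvu⟩ :=
    exists_continuous_fourierCoeff_eq_smul (hv.integrable hp1) hv₀ (M 0 (fourierCoeff f 0))
  have hfactor (k : ℤ) : (2 * π * Complex.I * k / (2 * π : ℝ) : ℂ) = Complex.I * k := by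
    push_cast
    field_simp
  simp only [hfactor] at hvu
  refine ⟨u, hu.memLp_of_hasCompactSupport (.of_compactSpace u), ⟨v, hv, hvu⟩, fun k => ?_⟩
  rcases eq_or_ne k 0 with rfl | hk
  · exact hu₀
  · refine smul_right_injective X (mul_ne_zero Complex.I_ne_zero (Int.cast_ne_zero.mpr hk)) ?_
    simp only [← hvu, hvf]

theorem multiplier_Lp_H1p_iff
    {X : Type} [NormedAddCommGroup X] [NormedSpace ℂ X] [CompleteSpace X]
    (p : ℝ≥0∞) (hp1 : 1 ≤ p) (hp2 : p ≠ ⊤) (M : ℤ → X →L[ℂ] X) :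
    (∀ f : AddCircle (2 * π) → X, MemLp f p haarAddCircle →
        ∃ u : AddCircle (2 * π) → X, MemLp u p haarAddCircle ∧
          (∃ v : AddCircle (2 * π) → X, MemLp v p haarAddCircle ∧
            ∀ k : ℤ, fourierCoeff v k = (Complex.I * (k : ℂ)) • fourierCoeff u k) ∧
          ∀ k : ℤ, fourierCoeff u k = M k (fourierCoeff f k)) ↔
      (∀ f : AddCircle (2 * π) → X, MemLp f p haarAddCircle →
        ∃ v : AddCircle (2 * π) → X, MemLp v p haarAddCircle ∧
          ∀ k : ℤ, fourierCoeff v k = (Complex.I * (k : ℂ)) • (M k (fourierCoeff f k))) :=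
  multiplier_Lp_H1p_iff_general p hp1 M
end

section
/- Let X be a complex Banach space, 1 ≤ p < ∞, and let (M_k)_{k∈ℤ} be a sequence of bounded linear operators on X. Then the following are equivalent: (i) (M_k)_{k∈ℤ} is an (L^p, H^{2,p})-multiplier, i.e. for every f ∈ L^p(𝕋;X) there exists u ∈ H^{2,p}(𝕋;X) with û(k) = M_k f̂(k) for all k ∈ ℤ; (ii) ((−k²)·M_k)_{k∈ℤ} is an (L^p, L^p)-multiplier, i.e. for every f ∈ L^p(𝕋;X) there exists v ∈ L^p(𝕋;X) with v̂(k) = (−k²)·M_k f̂(k) for all k ∈ ℤ. -/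
open MeasureTheory AddCircle Real ENNReal

/-! The implication (i) ⇒ (ii) is immediate. Conversely, given `v` with `v̂(k) = -k² cₖ` where
`cₖ = M_k f̂(k)`, the bound `‖v̂(k)‖ ≤ ‖v‖_{L¹}` gives `‖cₖ‖ ≤ ‖v‖_{L¹} / k²` for `k ≠ 0`, so `(cₖ)` is
absolutely summable. The Fourier series `u = ∑ₖ eₖ cₖ` then converges uniformly, so `u` is continuous,
lies in every `Lᵖ` and has `û = c`; the same `v` shows `u ∈ H^{2,p}`. -/

section FourierSum

variable {T : ℝ} {X : Type*} [NormedAddCommGroup X] [NormedSpace ℂ X]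

lemma norm_fourier_apply (n : ℤ) (t : AddCircle T) : ‖fourier n t‖ = 1 :=
  Circle.norm_coe _

lemma enorm_fourier_apply (n : ℤ) (t : AddCircle T) : ‖fourier n t‖ₑ = 1 := by
  rw [← ofReal_norm, norm_fourier_apply, ofReal_one]

noncomputable def fourierSum (c : ℤ → X) : AddCircle T → X :=
  fun t => ∑' k : ℤ, fourier k t • c k

variable {c : ℤ → X}

lemma continuous_fourierSum [CompleteSpace X] (hc : Summable (‖c ·‖)) :
    Continuous (fourierSum (T := T) c) :=
  continuous_tsum (fun k => (fourier k).continuous.smul continuous_const) hc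
    fun k t => by rw [norm_smul, norm_fourier_apply, one_mul]

variable [Fact (0 < T)]

lemma norm_fourierCoeff_le_integral_norm (f : AddCircle T → X) (n : ℤ) :
    ‖fourierCoeff f n‖ ≤ ∫ t, ‖f t‖ ∂haarAddCircle := by
  refine (norm_integral_le_integral_norm _).trans_eq ?_
  simp only [norm_smul, norm_fourier_apply, one_mul]

lemma fourierCoeff_tsum {ι : Type*} [Countable ι] {f : ι → AddCircle T → X}
    (hf : ∀ i, AEStronglyMeasurable (f i) haarAddCircle)
    (hf' : ∑' i, ∫⁻ t, ‖f i t‖ₑ ∂haarAddCircle ≠ ∞) (n : ℤ) :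
    fourierCoeff (fun t => ∑' i, f i t) n = ∑' i, fourierCoeff (f i) n := by
  simp_rw [fourierCoeff, ← tsum_const_smul'']
  refine integral_tsum (fun i => ?_) ?_
  · exact (fourier (-n)).continuous.aestronglyMeasurable.smul (hf i)
  · simpa only [enorm_smul, enorm_fourier_apply, one_mul] using hf'

variable [CompleteSpace X]

lemma fourierCoeff_fourier_smul (k n : ℤ) (x : X) :
    fourierCoeff (fun t : AddCircle T => fourier k t • x) n = (Pi.single k 1 : ℤ → ℂ) n • x := by
  rw [← fourierCoeff_fourier (T := T), fourierCoeff, fourierCoeff, ← integral_smul_const]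
  simp_rw [smul_smul, smul_eq_mul]

lemma memLp_fourierSum (hc : Summable (‖c ·‖)) (p : ℝ≥0∞) :
    MemLp (fourierSum (T := T) c) p haarAddCircle := by
  refine MemLp.of_bound (continuous_fourierSum hc).aestronglyMeasurable (∑' k, ‖c k‖)
    (.of_forall fun t => (norm_tsum_le_tsum_norm ?_).trans_eq ?_) <;>
    simp only [norm_smul, norm_fourier_apply, one_mul, hc]

lemma fourierCoeff_fourierSum (hc : Summable (‖c ·‖)) (n : ℤ) :
    fourierCoeff (fourierSum (T := T) c) n = c n := by
  unfold fourierSum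
  rw [fourierCoeff_tsum (f := fun k t => fourier k t • c k)
    (fun k => ((fourier k).continuous.smul continuous_const).aestronglyMeasurable)]
  · simp_rw [fourierCoeff_fourier_smul]
    rw [tsum_eq_single n fun k hk => by simp [hk.symm]]
    simp
  · simp only [enorm_smul, enorm_fourier_apply, one_mul, lintegral_const, measure_univ, mul_one]
    exact tsum_enorm_ne_top_iff_summable_norm.2 hc

end FourierSum

lemma summable_norm_of_sq_mul_norm_le {X : Type*} [NormedAddCommGroup X] {c : ℤ → X} (C : ℝ)
    (h : ∀ k : ℤ, (k : ℝ) ^ 2 * ‖c k‖ ≤ C) : Summable (‖c ·‖) := by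
  refine .of_norm_bounded_eventually ((summable_one_div_int_pow.2 one_lt_two).mul_left C) ?_
  filter_upwards [Filter.eventually_cofinite_ne 0] with k hk
  rw [norm_norm, mul_one_div, le_div_iff₀' (sq_pos_of_ne_zero (Int.cast_ne_zero.2 hk))]
  exact h k

theorem multiplier_Lp_H2p_iff_general
    {X : Type} [NormedAddCommGroup X] [NormedSpace ℂ X] [CompleteSpace X]
    (p : ℝ≥0∞) (M : ℤ → X →L[ℂ] X) :
    (∀ f : AddCircle (2 * π) → X, MemLp f p haarAddCircle →
        ∃ u : AddCircle (2 * π) → X, MemLp u p haarAddCircle ∧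
          (∃ v : AddCircle (2 * π) → X, MemLp v p haarAddCircle ∧
            ∀ k : ℤ, fourierCoeff v k = (-(k : ℂ) ^ 2) • fourierCoeff u k) ∧
          ∀ k : ℤ, fourierCoeff u k = M k (fourierCoeff f k)) ↔
      (∀ f : AddCircle (2 * π) → X, MemLp f p haarAddCircle →
        ∃ v : AddCircle (2 * π) → X, MemLp v p haarAddCircle ∧
          ∀ k : ℤ, fourierCoeff v k = (-(k : ℂ) ^ 2) • (M k (fourierCoeff f k))) := by
  refine ⟨fun h f hf => ?_, fun h f hf => ?_⟩
  · obtain ⟨u, -, ⟨v, hv, hvu⟩, huf⟩ := h f hf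
    exact ⟨v, hv, fun k => by rw [hvu, huf]⟩
  · obtain ⟨v, hv, hvc⟩ := h f hf
    set c : ℤ → X := fun k => M k (fourierCoeff f k)
    have hc : Summable (‖c ·‖) := summable_norm_of_sq_mul_norm_le _ fun k => by
      simpa [hvc, norm_smul] using norm_fourierCoeff_le_integral_norm v k
    exact ⟨fourierSum c, memLp_fourierSum hc p,
      ⟨v, hv, fun k => by rw [fourierCoeff_fourierSum hc, hvc]⟩, fourierCoeff_fourierSum hc⟩

theorem multiplier_Lp_H2p_iff
    {X : Type} [NormedAddCommGroup X] [NormedSpace ℂ X] [CompleteSpace X]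
    (p : ℝ≥0∞) (hp1 : 1 ≤ p) (hp2 : p ≠ ⊤) (M : ℤ → X →L[ℂ] X) :
    (∀ f : AddCircle (2 * π) → X, MemLp f p haarAddCircle →
        ∃ u : AddCircle (2 * π) → X, MemLp u p haarAddCircle ∧
          (∃ v : AddCircle (2 * π) → X, MemLp v p haarAddCircle ∧
            ∀ k : ℤ, fourierCoeff v k = (-(k : ℂ) ^ 2) • fourierCoeff u k) ∧
          ∀ k : ℤ, fourierCoeff u k = M k (fourierCoeff f k)) ↔
      (∀ f : AddCircle (2 * π) → X, MemLp f p haarAddCircle →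
        ∃ v : AddCircle (2 * π) → X, MemLp v p haarAddCircle ∧
          ∀ k : ℤ, fourierCoeff v k = (-(k : ℂ) ^ 2) • (M k (fourierCoeff f k))) :=
  multiplier_Lp_H2p_iff_general p M
end

section
/- Let X be a complex Banach space, A a bounded linear operator on X, and let k ∈ ℤ with k ≠ 0 and k ≠ −1. Suppose the operators B_k := −ik³I + A and B_{k+1} := −i(k+1)³I + A are both invertible with bounded inverses N_k := B_k^{-1} and N_{k+1} := B_{k+1}^{-1}, and set M_k := −ik³ N_k and M_{k+1} := −i(k+1)³ N_{k+1}. Then the following operator identity holds: k·(M_{k+1} − M_k) = (k(3k² + 3k + 1)/(k+1)³) · M_{k+1} ∘ (I − M_k). -/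
/- The second resolvent identity for `N = (a + A)⁻¹` and `N' = (b + A)⁻¹` reads
`N' - N = (a - b) N' N`. Rescaling to `M = a N`, `M' = b N'` it becomes
`M' (1 - M) = b / (b - a) • (M' - M)`, and for `a = -i k³`, `b = -i (k + 1)³` the factor `k (3k² + 3k + 1) / (k + 1)³ · b / (b - a)`
is exactly `k`, because `b - a = -i ((k + 1)³ - k³)`. -/

theorem sub_eq_smul_mul_of_shifted_inverses {𝕜 R : Type*} [CommRing 𝕜] [Ring R]
    [Algebra 𝕜 R] {A N N' : R} {a b : 𝕜}
    (hN : (a • (1 : R) + A) * N = 1) (hN' : N' * (b • (1 : R) + A) = 1) :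
    N' - N = (a - b) • (N' * N) := by
  calc N' - N = N' * ((a • (1 : R) + A) * N) - (N' * (b • (1 : R) + A)) * N := by
        rw [hN, hN', mul_one, one_mul]
    _ = (a - b) • (N' * N) := by
        simp only [mul_add, add_mul, mul_smul_comm, smul_mul_assoc, mul_one, one_mul, mul_assoc,
          sub_smul]
        abel

theorem smul_mul_one_sub_smul_of_shifted_inverses {𝕜 R : Type*} [Field 𝕜] [Ring R]
    [Algebra 𝕜 R] {A N N' : R} {a b : 𝕜} (hba : b - a ≠ 0)
    (hN : (a • (1 : R) + A) * N = 1) (hN' : N' * (b • (1 : R) + A) = 1) :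
    (b • N') * (1 - a • N) = (b / (b - a)) • (b • N' - a • N) := by
  have hab : a - b ≠ 0 := by rwa [← neg_sub, neg_ne_zero]
  have hmul : N' * N = (a - b)⁻¹ • (N' - N) := by
    rw [sub_eq_smul_mul_of_shifted_inverses hN hN', inv_smul_smul₀ hab]
  rw [mul_sub, mul_one, smul_mul_smul_comm, hmul, smul_smul]
  match_scalars <;> field_simp [hab, hba] <;> ring

theorem neg_I_mul_succ_cube_sub_ne_zero (k : ℤ) :
    -(Complex.I * ((k : ℂ) + 1) ^ 3) - -(Complex.I * (k : ℂ) ^ 3) ≠ 0 := by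
  have hcentered : (3 * (k : ℂ) ^ 2 + 3 * (k : ℂ) + 1) ≠ 0 := by
    exact_mod_cast (by nlinarith [sq_nonneg (2 * k + 1)] : 3 * k ^ 2 + 3 * k + 1 ≠ 0)
  have hdiff : -(Complex.I * ((k : ℂ) + 1) ^ 3) - -(Complex.I * (k : ℂ) ^ 3)
      = -Complex.I * (3 * (k : ℂ) ^ 2 + 3 * (k : ℂ) + 1) := by ring
  rw [hdiff]
  exact mul_ne_zero (neg_ne_zero.mpr Complex.I_ne_zero) hcentered

theorem operator_difference_coefficient (k : ℤ) (hk1 : k ≠ -1) :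
    (k : ℂ) * (3 * (k : ℂ) ^ 2 + 3 * (k : ℂ) + 1) / ((k : ℂ) + 1) ^ 3 *
      (-(Complex.I * ((k : ℂ) + 1) ^ 3) /
        (-(Complex.I * ((k : ℂ) + 1) ^ 3) - -(Complex.I * (k : ℂ) ^ 3))) = k := by
  have hsucc : (k : ℂ) + 1 ≠ 0 := by exact_mod_cast (by omega : k + 1 ≠ 0)
  rw [div_mul_div_comm, div_eq_iff (mul_ne_zero (pow_ne_zero 3 hsucc)
    (neg_I_mul_succ_cube_sub_ne_zero k))]
  ring

theorem operator_difference_identity_general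
    {X : Type*} [NormedAddCommGroup X] [NormedSpace ℂ X]
    (A : X →L[ℂ] X) (k : ℤ) (hk1 : k ≠ -1)
    (Nk Nk1 : X →L[ℂ] X)
    (hNk_right : ((-(Complex.I * (k : ℂ) ^ 3)) • (1 : X →L[ℂ] X) + A) ∘L Nk = 1)
    (hNk1_left : Nk1 ∘L ((-(Complex.I * ((k : ℂ) + 1) ^ 3)) • (1 : X →L[ℂ] X) + A) = 1) :
    (k : ℂ) • ((-(Complex.I * ((k : ℂ) + 1) ^ 3)) • Nk1 - (-(Complex.I * (k : ℂ) ^ 3)) • Nk)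
      = ((k : ℂ) * (3 * (k : ℂ) ^ 2 + 3 * (k : ℂ) + 1) / ((k : ℂ) + 1) ^ 3) •
          (((-(Complex.I * ((k : ℂ) + 1) ^ 3)) • Nk1) ∘L
            (1 - (-(Complex.I * (k : ℂ) ^ 3)) • Nk)) := by
  rw [← ContinuousLinearMap.mul_def, smul_mul_one_sub_smul_of_shifted_inverses
    (neg_I_mul_succ_cube_sub_ne_zero k) hNk_right hNk1_left, smul_smul,
    operator_difference_coefficient k hk1]

theorem operator_difference_identity
    {X : Type*} [NormedAddCommGroup X] [NormedSpace ℂ X] [CompleteSpace X]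
    (A : X →L[ℂ] X) (k : ℤ) (hk0 : k ≠ 0) (hk1 : k ≠ -1)
    (Nk Nk1 : X →L[ℂ] X)
    (hNk_left : Nk ∘L ((-(Complex.I * (k : ℂ) ^ 3)) • (1 : X →L[ℂ] X) + A) = 1)
    (hNk_right : ((-(Complex.I * (k : ℂ) ^ 3)) • (1 : X →L[ℂ] X) + A) ∘L Nk = 1)
    (hNk1_left : Nk1 ∘L ((-(Complex.I * ((k : ℂ) + 1) ^ 3)) • (1 : X →L[ℂ] X) + A) = 1)
    (hNk1_right : ((-(Complex.I * ((k : ℂ) + 1) ^ 3)) • (1 : X →L[ℂ] X) + A) ∘L Nk1 = 1) :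
    (k : ℂ) • ((-(Complex.I * ((k : ℂ) + 1) ^ 3)) • Nk1 - (-(Complex.I * (k : ℂ) ^ 3)) • Nk)
      = ((k : ℂ) * (3 * (k : ℂ) ^ 2 + 3 * (k : ℂ) + 1) / ((k : ℂ) + 1) ^ 3) •
          (((-(Complex.I * ((k : ℂ) + 1) ^ 3)) • Nk1) ∘L
            (1 - (-(Complex.I * (k : ℂ) ^ 3)) • Nk)) :=
  operator_difference_identity_general A k hk1 Nk Nk1 hNk_right hNk1_left
end

section
/- Let X be a complex Banach space, A : D(A) ⊆ X → X a closed linear operator, and 1 ≤ p < ∞. Suppose (i) for every k ∈ ℤ the map Δ_k : D(A) → X, Δ_k x = (ik)³x − Ax, is bijective, and (ii) the sequence ((ik)³ Δ_k^{-1})_{k∈ℤ} is an L^p-multiplier: for every f ∈ L^p(𝕋;X) there exists v ∈ L^p(𝕋;X) such that v̂(k) = (ik)³ Δ_k^{-1} f̂(k) for all k ∈ ℤ. Then for every f ∈ L^p(𝕋;X) there exists a unique z ∈ L^p(𝕋;X) such that ẑ(k) ∈ D(A) and (ik)³ ẑ(k) − A ẑ(k) = f̂(k) for all k ∈ ℤ,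 and moreover this z lies in H^{3,p}(𝕋;X), i.e. there exists v ∈ L^p(𝕋;X) with v̂(k) = (ik)³ ẑ(k) for all k ∈ ℤ. -/
/-!
Since `Δ₀ = -A` is bijective and `A` is closed, the closed graph theorem makes `A⁻¹` a bounded
operator `B` on `X`. If `v` is the multiplier image of `f`, then `z = B ∘ (v - f)` lies in `L^p` and
`ẑ(k) = A⁻¹((ik)³ Δ_k⁻¹ f̂(k) - Δ_k Δ_k⁻¹ f̂(k)) = Δ_k⁻¹ f̂(k)`, which gives existence together with
`v̂(k) = (ik)³ ẑ(k)`. Uniqueness: any other solution has the same Fourier coefficients by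
injectivity of `Δ_k`, and an integrable function on the circle is determined by its Fourier
coefficients, because trigonometric polynomials are dense in `C(𝕋)` and continuous functions
approximate the indicators of closed sets.
-/

open MeasureTheory AddCircle Real ENNReal

open scoped NNReal BoundedContinuousFunction
open Filter Set Topology

namespace MeasureTheory.Integrable

theorem ae_eq_zero_of_forall_integral_smul_eq_zero {Ω E : Type*} [PseudoEMetricSpace Ω]
    [MeasurableSpace Ω] [BorelSpace Ω] [NormedAddCommGroup E] [NormedSpace ℝ E] [CompleteSpace E] {μ : Measure Ω} {g : Ω → E}
    (hg : Integrable g μ) (h : ∀ c : Ω →ᵇ ℝ≥0, ∫ x, (c x : ℝ) • g x ∂μ = 0) :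
    g =ᵐ[μ] 0 := by
  refine ae_eq_zero_of_forall_setIntegral_isClosed_eq_zero hg fun F hF => ?_
  have hδ : ∀ n : ℕ, (0 : ℝ) < 1 / (n + 1) := fun n => Nat.one_div_pos_of_nat
  have hlim : Tendsto (fun n => ∫ x, (thickenedIndicator (hδ n) F x : ℝ) • g x ∂μ) atTop
      (𝓝 (∫ x, F.indicator g x ∂μ)) := by
    refine tendsto_integral_of_dominated_convergence (fun x => ‖g x‖) (fun n => ?_) hg.norm
      (fun n => ae_of_all _ fun x => ?_) (ae_of_all _ fun x => ?_)
    · exact (NNReal.continuous_coe.comp (thickenedIndicator _ F).continuous).aestronglyMeasurable.smul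
        hg.aestronglyMeasurable
    · rw [norm_smul]
      exact mul_le_of_le_one_left (norm_nonneg _)
        (by simpa only [NNReal.norm_eq] using NNReal.coe_le_one.2 (thickenedIndicator_le_one _ F x))
    · have hx := tendsto_pi_nhds.1 (thickenedIndicator_tendsto_indicator_closure hδ
        tendsto_one_div_add_atTop_nhds_zero_nat F) x
      rw [hF.closure_eq] at hx
      have hlimx : F.indicator g x = ((F.indicator (fun _ => (1 : ℝ≥0)) x : ℝ≥0) : ℝ) • g x := by
        by_cases hxF : x ∈ F
        · simp only [indicator_of_mem hxF, NNReal.coe_one, one_smul]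
        · simp only [indicator_of_notMem hxF, NNReal.coe_zero, zero_smul]
      rw [hlimx]
      exact ((NNReal.continuous_coe.tendsto _).comp hx).smul_const (g x)
  rw [← integral_indicator hF.measurableSet]
  exact tendsto_nhds_unique hlim (by simp only [h]; exact tendsto_const_nhds)

variable {Ω E : Type*} [MeasurableSpace Ω] [TopologicalSpace Ω] [OpensMeasurableSpace Ω]
  [CompactSpace Ω] [NormedAddCommGroup E] [NormedSpace ℂ E] {μ : Measure Ω} {g : Ω → E}

theorem continuousMap_smul (hg : Integrable g μ) (c : C(Ω, ℂ)) :
    Integrable (fun x => c x • g x) μ :=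
  hg.bdd_smul ‖c‖ c.continuous.aestronglyMeasurable (ae_of_all _ c.norm_coe_le_norm)

noncomputable def integralSmulCLM (hg : Integrable g μ) : C(Ω, ℂ) →L[ℂ] E :=
  LinearMap.mkContinuous
    { toFun := fun c => ∫ x, c x • g x ∂μ
      map_add' := fun c c' => by
        simp only [ContinuousMap.add_apply, add_smul]
        exact integral_add (hg.continuousMap_smul c) (hg.continuousMap_smul c')
      map_smul' := fun a c => by
        simp only [ContinuousMap.smul_apply, smul_eq_mul, mul_smul, RingHom.id_apply]
        exact MeasureTheory.integral_smul a _ }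
    (∫ x, ‖g x‖ ∂μ) fun c =>
      calc ‖∫ x, c x • g x ∂μ‖ ≤ ∫ x, ‖c‖ * ‖g x‖ ∂μ :=
            norm_integral_le_of_norm_le (hg.norm.const_mul _) (ae_of_all _ fun x => by
              rw [norm_smul]; exact mul_le_mul_of_nonneg_right (c.norm_coe_le_norm x) (norm_nonneg _))
        _ = (∫ x, ‖g x‖ ∂μ) * ‖c‖ := by rw [integral_const_mul, mul_comm]

@[simp]
theorem integralSmulCLM_apply (hg : Integrable g μ) (c : C(Ω, ℂ)) :
    hg.integralSmulCLM c = ∫ x, c x • g x ∂μ :=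
  rfl

end MeasureTheory.Integrable

section Fourier

variable {T : ℝ} [Fact (0 < T)] {E : Type*} [NormedAddCommGroup E] [NormedSpace ℂ E]
  {f g : AddCircle T → E}

theorem fourierCoeff_sub (hf : Integrable f haarAddCircle) (hg : Integrable g haarAddCircle) :
    fourierCoeff (f - g) = fourierCoeff f - fourierCoeff g := by
  ext n
  simpa [fourierCoeff, smul_sub, -fourier_apply] using
    integral_sub (hf.fourier_smul (-n)) (hg.fourier_smul (-n))

theorem ContinuousLinearMap.fourierCoeff_comp [CompleteSpace E] {F : Type*} [NormedAddCommGroup F]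
    [NormedSpace ℂ F] [CompleteSpace F] (L : E →L[ℂ] F) (hf : Integrable f haarAddCircle) (n : ℤ) :
    fourierCoeff (L ∘ f) n = L (fourierCoeff f n) := by
  simp only [fourierCoeff, Function.comp_apply, ← L.map_smul]
  exact L.integral_comp_comm (hf.fourier_smul (-n))

variable [CompleteSpace E]

theorem MeasureTheory.Integrable.ae_eq_zero_of_fourierCoeff_eq_zero
    (hg : Integrable g haarAddCircle) (h : ∀ n, fourierCoeff g n = 0) :
    g =ᵐ[haarAddCircle] 0 := by
  have hpairing : hg.integralSmulCLM = 0 := by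
    refine ContinuousLinearMap.ext_on (s := range fourier)
      (Submodule.dense_iff_topologicalClosure_eq_top.2 span_fourier_closure_eq_top) ?_
    rintro - ⟨n, rfl⟩
    simpa [fourierCoeff, -fourier_apply] using h (-n)
  refine hg.ae_eq_zero_of_forall_integral_smul_eq_zero fun c => ?_
  have hc := congr($hpairing (ContinuousMap.mk (fun x => ((c x : ℝ) : ℂ)) (by fun_prop)))
  simpa only [integralSmulCLM_apply, ContinuousMap.coe_mk, Complex.coe_smul, zero_apply] using hc

theorem MeasureTheory.Integrable.ae_eq_of_fourierCoeff_eq (hf : Integrable f haarAddCircle)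
    (hg : Integrable g haarAddCircle) (h : fourierCoeff f = fourierCoeff g) :
    f =ᵐ[haarAddCircle] g :=
  (hf.sub hg).ae_eq_zero_of_fourierCoeff_eq_zero (by simp [fourierCoeff_sub hf hg, h])
    |>.mono fun _ hx => sub_eq_zero.1 hx

end Fourier

theorem LinearMap.exists_continuous_inverse_of_isClosed_graph {𝕜 X Y : Type*}
    [NontriviallyNormedField 𝕜] [NormedAddCommGroup X] [NormedSpace 𝕜 X] [CompleteSpace X]
    [NormedAddCommGroup Y] [NormedSpace 𝕜 Y] [CompleteSpace Y] {D : Submodule 𝕜 X}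
    (A : D →ₗ[𝕜] Y) (hclosed : IsClosed {q : X × Y | ∃ h : q.1 ∈ D, A ⟨q.1, h⟩ = q.2})
    (hA : Function.Bijective A) : ∃ B : Y →L[𝕜] X, ∀ x : D, B (A x) = x := by
  let e := LinearEquiv.ofBijective A hA
  let B : Y →ₗ[𝕜] X := D.subtype ∘ₗ e.symm.toLinearMap
  have hgraph : (B.graph : Set (Y × X)) =
      Prod.swap ⁻¹' {q : X × Y | ∃ h : q.1 ∈ D, A ⟨q.1, h⟩ = q.2} := by
    ext ⟨y, x⟩
    simp only [SetLike.mem_coe, LinearMap.mem_graph_iff, mem_preimage, Prod.swap_prod_mk,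
      mem_ofPred_eq]
    constructor
    · rintro rfl
      exact ⟨(e.symm y).2, e.apply_symm_apply y⟩
    · rintro ⟨hx, hxy⟩
      rw [← hxy]
      exact congrArg Subtype.val (e.symm_apply_apply ⟨x, hx⟩).symm
  refine ⟨.ofIsClosedGraph (g := B) (hgraph ▸ hclosed.preimage continuous_swap), fun x => ?_⟩
  exact congrArg Subtype.val (e.symm_apply_apply x)

theorem existence_uniqueness_of_multiplier_general
    {X : Type} [NormedAddCommGroup X] [NormedSpace ℂ X] [CompleteSpace X]
    (D : Submodule ℂ X) (A : D →ₗ[ℂ] X)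
    (hclosed : IsClosed {q : X × X | ∃ h : q.1 ∈ D, A ⟨q.1, h⟩ = q.2})
    (p : ℝ≥0∞) (hp1 : 1 ≤ p)
    (hbij : ∀ k : ℤ, Function.Bijective
      (fun x : D => (Complex.I * (k : ℂ)) ^ 3 • (x : X) - A x))
    (hmult : ∀ f : AddCircle (2 * π) → X, MemLp f p haarAddCircle →
      ∃ v : AddCircle (2 * π) → X, MemLp v p haarAddCircle ∧
        ∀ k : ℤ, ∀ x : D,
          (Complex.I * (k : ℂ)) ^ 3 • (x : X) - A x = fourierCoeff f k →
          fourierCoeff v k = (Complex.I * (k : ℂ)) ^ 3 • (x : X)) :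
    ∀ f : AddCircle (2 * π) → X, MemLp f p haarAddCircle →
      ∃ z : AddCircle (2 * π) → X, MemLp z p haarAddCircle ∧
        (∀ k : ℤ, ∃ h : fourierCoeff z k ∈ D,
          (Complex.I * (k : ℂ)) ^ 3 • fourierCoeff z k - A ⟨fourierCoeff z k, h⟩
            = fourierCoeff f k) ∧
        (∃ v : AddCircle (2 * π) → X, MemLp v p haarAddCircle ∧
          ∀ k : ℤ, fourierCoeff v k = (Complex.I * (k : ℂ)) ^ 3 • fourierCoeff z k) ∧
        ∀ z' : AddCircle (2 * π) → X, MemLp z' p haarAddCircle →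
          (∀ k : ℤ, ∃ h : fourierCoeff z' k ∈ D,
            (Complex.I * (k : ℂ)) ^ 3 • fourierCoeff z' k - A ⟨fourierCoeff z' k, h⟩
              = fourierCoeff f k) →
          z' =ᵐ[haarAddCircle] z := by
  intro f hf
  obtain ⟨v, hv, hvf⟩ := hmult f hf
  choose x hx using fun k => (hbij k).surjective (fourierCoeff f k)
  beta_reduce at hx
  -- the symbol at `k = 0` is `-A`
  have hA : Function.Bijective A := by
    simpa [Function.comp_def] using neg_involutive.bijective.comp (hbij 0)
  obtain ⟨B, hB⟩ := A.exists_continuous_inverse_of_isClosed_graph hclosed hA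
  have hz : MemLp (B ∘ (v - f)) p haarAddCircle := B.comp_memLp' (hv.sub hf)
  have hzx : ∀ k, fourierCoeff (B ∘ (v - f)) k = x k := fun k => by
    rw [B.fourierCoeff_comp ((hv.sub hf).integrable hp1), fourierCoeff_sub (hv.integrable hp1)
      (hf.integrable hp1), Pi.sub_apply, hvf k _ (hx k), ← hx k, _root_.sub_sub_cancel, hB]
  refine ⟨B ∘ (v - f), hz, fun k => ⟨hzx k ▸ (x k).2, by simpa only [hzx] using hx k⟩,
    ⟨v, hv, fun k => by rw [hzx, hvf k _ (hx k)]⟩, fun z' hz' hz'f => ?_⟩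
  refine (hz'.integrable hp1).ae_eq_of_fourierCoeff_eq (hz.integrable hp1) (funext fun k => ?_)
  obtain ⟨hmem, hk⟩ := hz'f k
  rw [hzx k]
  exact congrArg Subtype.val ((hbij k).injective (a₁ := ⟨_, hmem⟩) (hk.trans (hx k).symm))

theorem existence_uniqueness_of_multiplier
    {X : Type} [NormedAddCommGroup X] [NormedSpace ℂ X] [CompleteSpace X]
    (D : Submodule ℂ X) (A : D →ₗ[ℂ] X)
    (hclosed : IsClosed {q : X × X | ∃ h : q.1 ∈ D, A ⟨q.1, h⟩ = q.2})
    (p : ℝ≥0∞) (hp1 : 1 ≤ p) (hp2 : p ≠ ⊤)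
    (hbij : ∀ k : ℤ, Function.Bijective
      (fun x : D => (Complex.I * (k : ℂ)) ^ 3 • (x : X) - A x))
    (hmult : ∀ f : AddCircle (2 * π) → X, MemLp f p haarAddCircle →
      ∃ v : AddCircle (2 * π) → X, MemLp v p haarAddCircle ∧
        ∀ k : ℤ, ∀ x : D,
          (Complex.I * (k : ℂ)) ^ 3 • (x : X) - A x = fourierCoeff f k →
          fourierCoeff v k = (Complex.I * (k : ℂ)) ^ 3 • (x : X)) :
    ∀ f : AddCircle (2 * π) → X, MemLp f p haarAddCircle →
      ∃ z : AddCircle (2 * π) → X, MemLp z p haarAddCircle ∧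
        (∀ k : ℤ, ∃ h : fourierCoeff z k ∈ D,
          (Complex.I * (k : ℂ)) ^ 3 • fourierCoeff z k - A ⟨fourierCoeff z k, h⟩
            = fourierCoeff f k) ∧
        (∃ v : AddCircle (2 * π) → X, MemLp v p haarAddCircle ∧
          ∀ k : ℤ, fourierCoeff v k = (Complex.I * (k : ℂ)) ^ 3 • fourierCoeff z k) ∧
        ∀ z' : AddCircle (2 * π) → X, MemLp z' p haarAddCircle →
          (∀ k : ℤ, ∃ h : fourierCoeff z' k ∈ D,
            (Complex.I * (k : ℂ)) ^ 3 • fourierCoeff z' k - A ⟨fourierCoeff z' k, h⟩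
              = fourierCoeff f k) →
          z' =ᵐ[haarAddCircle] z :=
  existence_uniqueness_of_multiplier_general D A hclosed p hp1 hbij hmult
end
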